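/- arXiv:math/0304413 — 2 statements merged into one kernel-verified Lean document; each statement's English description precedes it below -/
import Mathlib

section
/- Let L and N be normal subgroups of a finite group G with L/N an abelian chief factor of G, and let θ ∈ Irr(L) be G-invariant. Then the restriction θ_N is reducible if and only if θ(g) = 0 for all g ∈ L \ N. -/
open scoped Classical BigOperators

/-- Inner product of class functions on a finite group. -/
noncomputable def charInner (G : Type) [Group G] [Fintype G] (φ ψ : G → ℂ) : ℂ :=
  (Fintype.card G : ℂ)⁻¹ * ∑ g : G, φ g * (starRingEnd ℂ) (ψ g)

/-- `χ` is the character of an irreducible complex representation of `G`. -/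
def IsIrrChar (G : Type) [Group G] [Fintype G] (χ : G → ℂ) : Prop :=
  ∃ V : FDRep ℂ G, CategoryTheory.Simple V ∧ V.character = χ

/-- The number of distinct non-principal irreducible constituents of `χ ⬝ conj χ`. -/
noncomputable def etaChar (G : Type) [Group G] [Fintype G] (χ : G → ℂ) : ℕ :=
  Set.ncard {α : G → ℂ | IsIrrChar G α ∧ α ≠ (fun _ => 1) ∧
    charInner G (fun g => χ g * (starRingEnd ℂ) (χ g)) α ≠ 0}

/-- Kernel of a character, as a set. -/
def charKer (G : Type) [Group G] (χ : G → ℂ) : Set G := {g | χ g = χ 1}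

/-- Induced character from a subgroup. -/
noncomputable def indChar (K : Type) [Group K] [Fintype K] (H : Subgroup K) (φ : H → ℂ) :
    K → ℂ := fun k =>
  (Nat.card H : ℂ)⁻¹ * ∑ x : K, if h : x⁻¹ * k * x ∈ H then φ ⟨x⁻¹ * k * x, h⟩ else 0


/-- Derived length of a group. -/
noncomputable def derivedLength (G : Type) [Group G] : ℕ :=
  sInf {n | derivedSeries G n = ⊥}

/-- A finite group is supersolvable if it has a chain of normal subgroups of `G`
from `⊥` to `⊤` with cyclic factors. -/
def IsSupersolvableGroup (G : Type) [Group G] : Prop :=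
  ∃ (n : ℕ) (H : Fin (n + 1) → Subgroup G),
    (∀ i, (H i).Normal) ∧ Monotone H ∧ H 0 = ⊥ ∧ H (Fin.last n) = ⊤ ∧
    ∀ i : Fin n, ∃ g ∈ H i.succ, H i.succ ≤ H i.castSucc ⊔ Subgroup.zpowers g

namespace IrrAux

open CategoryTheory FDRep Module Representation

section PlainGroup

variable {H : Type} [Group H]

theorem hom_apply_comm {X Y : FDRep ℂ H} (f : X ⟶ Y) (g : H) (v : X) :
    f.hom (X.ρ g v) = Y.ρ g (f.hom v) := LinearMap.congr_fun (congrArg (fun φ => φ.hom.hom) (f.comm g)) v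

/-- Invariant submodule. -/
def IsSub (X : FDRep ℂ H) (p : Submodule ℂ X) : Prop := ∀ g : H, ∀ v ∈ p, X.ρ g v ∈ p

noncomputable def subRep (X : FDRep ℂ H) (p : Submodule ℂ X) (hp : IsSub X p) : FDRep ℂ H :=
  FDRep.of
    { toFun := fun g => (X.ρ g).restrict (p := p) (q := p) (hp g)
      map_one' := by ext v; simp [LinearMap.restrict_apply]
      map_mul' := fun g h => by ext v; simp [LinearMap.restrict_apply] }

noncomputable def subRepIncl (X : FDRep ℂ H) (p : Submodule ℂ X) (hp : IsSub X p) :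
    subRep X p hp ⟶ X :=
  ⟨FGModuleCat.ofHom p.subtype, fun g => FGModuleCat.hom_ext (LinearMap.ext fun v => rfl)⟩

theorem mono_subRepIncl (X : FDRep ℂ H) (p : Submodule ℂ X) (hp : IsSub X p) :
    Mono (subRepIncl X p hp) := by
  constructor
  intro Z a b hab
  apply Action.Hom.ext
  apply FGModuleCat.hom_ext
  apply LinearMap.ext; intro v
  have := LinearMap.congr_fun (congrArg (fun φ => φ.hom.hom.hom) hab) v
  exact Subtype.ext this

theorem eq_bot_or_top_of_isSub (X : FDRep ℂ H) [Simple X] {p : Submodule ℂ X}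
    (hp : IsSub X p) : p = ⊥ ∨ p = ⊤ := by
  by_cases hb : p = ⊥
  · exact Or.inl hb
  right
  obtain ⟨v, hvp, hv⟩ := (Submodule.ne_bot_iff p).mp hb
  have hincl : subRepIncl X p hp ≠ 0 := by
    intro h0
    have h1 : ((subRepIncl X p hp).hom ⟨v, hvp⟩ : X) = 0 := by rw [h0]; rfl
    exact hv h1
  haveI := mono_subRepIncl X p hp
  haveI : IsIso (subRepIncl X p hp) := isIso_of_mono_of_nonzero hincl
  rw [eq_top_iff]; intro x _
  have h3 : ∃ u : ↥p, (u : X) = x :=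
    ⟨(inv (subRepIncl X p hp)).hom x, LinearMap.congr_fun
      (congrArg (fun φ => φ.hom.hom.hom) (IsIso.inv_hom_id (subRepIncl X p hp))) x⟩
  obtain ⟨u, hu⟩ := h3
  exact hu ▸ u.2

theorem exists_ne_zero (X : FDRep ℂ H) [Simple X] : ∃ v : X, v ≠ 0 := by
  by_contra h
  push_neg at h
  exact id_nonzero X (Action.Hom.ext (FGModuleCat.hom_ext (LinearMap.ext fun v => h v)))

theorem simple_of (X : FDRep ℂ H) (hnt : ∃ v : X, v ≠ 0)
    (hs : ∀ p : Submodule ℂ X, IsSub X p → p = ⊥ ∨ p = ⊤) : Simple X := by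
  constructor
  intro Y f hm
  constructor
  · intro hiso h0
    obtain ⟨v, hv⟩ := hnt
    have hf0 : (f.hom.hom.hom : Y →ₗ[ℂ] X) = 0 := by rw [h0]; rfl
    have h2 : f.hom.hom.hom ((inv f).hom v) = v :=
      LinearMap.congr_fun (congrArg (fun φ => φ.hom.hom.hom) (IsIso.inv_hom_id f)) v
    rw [hf0] at h2
    exact hv (by simpa using h2.symm)
  · intro hne
    have hK : IsSub Y (LinearMap.ker f.hom.hom.hom) := by
      intro g v hv
      rw [LinearMap.mem_ker] at hv ⊢
      calc f.hom (Y.ρ g v) = X.ρ g (f.hom v) := hom_apply_comm f g v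
        _ = X.ρ g 0 := congrArg (fun t => X.ρ g t) hv
        _ = 0 := map_zero _
    have hinj : Function.Injective (f.hom.hom.hom : Y →ₗ[ℂ] X) := by
      rw [← LinearMap.ker_eq_bot]
      by_contra hKb
      obtain ⟨v, hvK, hv⟩ := (Submodule.ne_bot_iff _).mp hKb
      have hcomp : subRepIncl Y _ hK ≫ f = (0 : subRep Y _ hK ⟶ Y) ≫ f := by
        apply Action.Hom.ext
        apply FGModuleCat.hom_ext
        apply LinearMap.ext; intro w
        have hw : f.hom w.1 = 0 := LinearMap.mem_ker.mp w.2
        show f.hom w.1 = f.hom 0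
        rw [map_zero]
        exact hw
      have := hm.right_cancellation _ _ hcomp
      have hvz : v = 0 := LinearMap.congr_fun (congrArg (fun φ => φ.hom.hom.hom) this) ⟨v, hvK⟩
      exact hv hvz
    have hR : IsSub X (LinearMap.range f.hom.hom.hom) := by
      rintro g v ⟨w, rfl⟩
      exact ⟨Y.ρ g w, hom_apply_comm f g w⟩
    have hRnb : LinearMap.range f.hom.hom.hom ≠ ⊥ := by
      intro hb
      exact hne (Action.Hom.ext (FGModuleCat.hom_ext (LinearMap.range_eq_bot.mp hb)))
    have hsurj : Function.Surjective (f.hom.hom.hom : Y →ₗ[ℂ] X) :=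
      LinearMap.range_eq_top.mp ((hs _ hR).resolve_left hRnb)
    have : IsIso (f.hom) := by
      refine ⟨FGModuleCat.ofHom (LinearEquiv.ofBijective (f.hom.hom.hom : Y →ₗ[ℂ] X) ⟨hinj, hsurj⟩).symm.toLinearMap,
        FGModuleCat.hom_ext (LinearMap.ext fun v => ?_), FGModuleCat.hom_ext (LinearMap.ext fun v => ?_)⟩
      · exact (LinearEquiv.ofBijective (f.hom.hom.hom : Y →ₗ[ℂ] X) ⟨hinj, hsurj⟩).symm_apply_apply v
      · exact (LinearEquiv.ofBijective (f.hom.hom.hom : Y →ₗ[ℂ] X) ⟨hinj, hsurj⟩).apply_symm_apply v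
    infer_instance


/-- Twist of a representation by a linear character. -/
noncomputable def twist (X : FDRep ℂ H) (l : H →* ℂˣ) : FDRep ℂ H :=
  FDRep.of
    { toFun := fun g => (l g : ℂ) • X.ρ g
      map_one' := by simp
      map_mul' := fun g h => by
        ext v
        show (l (g * h) : ℂ) • X.ρ (g * h) v = (l g : ℂ) • (X.ρ g ((l h : ℂ) • X.ρ h v))
        calc (l (g * h) : ℂ) • X.ρ (g * h) v
            = ((l g : ℂ) * (l h : ℂ)) • X.ρ g (X.ρ h v) := by
              rw [map_mul, map_mul, Module.End.mul_apply, Units.val_mul]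
          _ = (l g : ℂ) • (X.ρ g ((l h : ℂ) • X.ρ h v)) := by
              rw [LinearMap.map_smul, smul_smul] }

theorem twist_char (X : FDRep ℂ H) (l : H →* ℂˣ) (g : H) :
    (twist X l).character g = (l g : ℂ) * X.character g := by
  show LinearMap.trace ℂ _ ((l g : ℂ) • X.ρ g) = _
  rw [map_smul, smul_eq_mul]
  rfl

theorem twist_simple (X : FDRep ℂ H) [Simple X] (l : H →* ℂˣ) : Simple (twist X l) := by
  apply simple_of
  · exact exists_ne_zero X
  · intro p hp
    have hp' : IsSub X p := by
      intro g v hv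
      have h2 : ((l g : ℂ) • X.ρ g) v ∈ p := hp g v hv
      have h3 : ((l g : ℂ))⁻¹ • ((l g : ℂ) • X.ρ g) v ∈ p := p.smul_mem _ h2
      rwa [LinearMap.smul_apply, inv_smul_smul₀ (Units.ne_zero (l g))] at h3
    exact eq_bot_or_top_of_isSub X hp'

section Fin

variable [Fintype H] [Invertible ((Fintype.card H : ℂ))]

theorem char_self_eq (X : FDRep ℂ H) :
    ⅟ (Fintype.card H : ℂ) • ∑ g : H, X.character g * X.character g⁻¹ =
      (finrank ℂ (X ⟶ X) : ℂ) := by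
  haveI : Invertible (Nat.card H : ℂ) := by rwa [Nat.card_eq_fintype_card]
  rw [invOf_eq_inv, smul_eq_mul, ← Nat.card_eq_fintype_card]
  exact FDRep.scalar_product_char_eq_finrank_equivariant X X

theorem simple_of_inner_one (X : FDRep ℂ H) (hnt : ∃ v : X, v ≠ 0)
    (h1 : ⅟ (Fintype.card H : ℂ) • ∑ g : H, X.character g * X.character g⁻¹ = 1) :
    Simple X := by
  have hfr : finrank ℂ (X ⟶ X) = 1 := by
    have h2 := (char_self_eq X).symm.trans h1
    exact_mod_cast h2
  have hid : (𝟙 X : X ⟶ X) ≠ 0 := by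
    intro h
    obtain ⟨v, hv⟩ := hnt
    exact hv (LinearMap.congr_fun (congrArg (fun φ => φ.hom.hom.hom) h) v)
  have hscal : ∀ e : X ⟶ X, ∃ c : ℂ, c • (𝟙 X : X ⟶ X) = e :=
    (finrank_eq_one_iff_of_nonzero' (𝟙 X : X ⟶ X) hid).mp hfr
  apply simple_of X hnt
  intro p hp
  by_contra hcon
  push_neg at hcon
  obtain ⟨hpb, hpt⟩ := hcon
  obtain ⟨q, hq⟩ := Submodule.exists_isCompl p
  set c := (Fintype.card H : ℂ)
  set π₀ : X →ₗ[ℂ] X := p.subtype ∘ₗ (p.projectionOnto q hq) with hπ₀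
  have hπ₀p : ∀ v : X, π₀ v ∈ p := fun v => (p.projectionOnto q hq v).2
  have hπ₀id : ∀ v ∈ p, π₀ v = v := by
    intro v hv
    show (p.subtype (p.projectionOnto q hq v) : X) = v
    rw [show v = ((⟨v, hv⟩ : ↥p) : X) from rfl, Submodule.projectionOnto_apply_left hq]
    rfl
  set π : X →ₗ[ℂ] X := ⅟c • ∑ g : H, (X.ρ g) ∘ₗ π₀ ∘ₗ (X.ρ g⁻¹) with hπ
  have hπapp : ∀ v : X, π v = ⅟c • ∑ g : H, X.ρ g (π₀ (X.ρ g⁻¹ v)) := by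
    intro v
    rw [hπ]
    simp [LinearMap.sum_apply]
  have hπmem : ∀ v : X, π v ∈ p := by
    intro v
    rw [hπapp]
    exact p.smul_mem _ (Submodule.sum_mem _ fun g _ => hp g _ (hπ₀p _))
  have hπid : ∀ v ∈ p, π v = v := by
    intro v hv
    rw [hπapp]
    have h5 : ∀ g : H, X.ρ g (π₀ (X.ρ g⁻¹ v)) = v := by
      intro g
      rw [hπ₀id _ (hp g⁻¹ v hv), ← Module.End.mul_apply, ← map_mul, mul_inv_cancel, map_one,
        Module.End.one_apply]
    rw [Finset.sum_congr rfl fun g _ => h5 g, Finset.sum_const, Finset.card_univ,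
      ← Nat.cast_smul_eq_nsmul ℂ, smul_smul, invOf_mul_self', one_smul]
  have hπcomm : ∀ g : H, ∀ v : X, π (X.ρ g v) = X.ρ g (π v) := by
    intro h v
    rw [hπapp, hπapp, map_smul, map_sum]
    congr 1
    rw [← Equiv.sum_comp (Equiv.mulLeft h) (fun g => X.ρ g (π₀ (X.ρ g⁻¹ (X.ρ h v))))]
    refine Finset.sum_congr rfl fun g _ => ?_
    simp only [Equiv.coe_mulLeft]
    have e1 : X.ρ (h * g)⁻¹ (X.ρ h v) = X.ρ g⁻¹ v := by
      rw [← Module.End.mul_apply, ← map_mul]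
      congr 1
      group
    calc X.ρ (h * g) (π₀ (X.ρ (h * g)⁻¹ (X.ρ h v)))
        = X.ρ (h * g) (π₀ (X.ρ g⁻¹ v)) := by rw [e1]
      _ = X.ρ h (X.ρ g (π₀ (X.ρ g⁻¹ v))) := by rw [map_mul, Module.End.mul_apply]
  let Pie : X ⟶ X := ⟨FGModuleCat.ofHom π, fun g => FGModuleCat.hom_ext (LinearMap.ext fun v =>
    show π (X.ρ g v) = X.ρ g (π v) from hπcomm g v)⟩
  obtain ⟨cc, hcc⟩ := hscal Pie
  have hπeq : ∀ v : X, π v = cc • v := by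
    intro v
    exact (LinearMap.congr_fun (congrArg (fun φ => φ.hom.hom.hom) hcc) v).symm
  obtain ⟨v, hvp, hv0⟩ := (Submodule.ne_bot_iff p).mp hpb
  have hc1 : cc = 1 := by
    have h6 : cc • v = v := by rw [← hπeq v, hπid v hvp]
    have h7 : (cc - 1) • v = 0 := by rw [sub_smul, one_smul, h6, sub_self]
    rcases smul_eq_zero.mp h7 with h | h
    · exact sub_eq_zero.mp h
    · exact absurd h hv0
  obtain ⟨w, hw⟩ : ∃ w : X, w ∉ p := by
    by_contra h
    push_neg at h
    exact hpt (Submodule.eq_top_iff'.mpr h)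
  apply hw
  have := hπmem w
  rwa [hπeq w, hc1, one_smul] at this


theorem ortho (V W : FDRep ℂ H) [Simple V] [Simple W] :
    ⅟ (Fintype.card H : ℂ) • ∑ g : H, V.character g * W.character g⁻¹ =
      if Nonempty (V ≅ W) then 1 else 0 := by
  haveI : Invertible (Nat.card H : ℂ) := by rwa [Nat.card_eq_fintype_card]
  rw [invOf_eq_inv, smul_eq_mul, ← Nat.card_eq_fintype_card]
  have h := FDRep.char_orthonormal V W
  push_cast at h
  exact h

-- the "S = c" helper
theorem eq_of_invOf_smul_eq_one {c S : ℂ} [Invertible c] (h : ⅟c • S = 1) : S = c := by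
  have h2 := congrArg (fun t => c * t) h
  simp only [smul_eq_mul] at h2
  rwa [mul_invOf_cancel_left, mul_one] at h2

-- sum over subgroup as filtered sum
theorem sum_subtype_eq {Γ : Type} [Group Γ] [Fintype Γ] (N' : Subgroup Γ) (F : Γ → ℂ) :
    ∑ n : ↥N', F ↑n = ∑ x : Γ, if x ∈ N' then F x else 0 := by
  rw [← Finset.sum_filter]
  exact (Finset.sum_subtype _ (fun x => by simp) F).symm


end Fin

end PlainGroup

end IrrAux

/-- For a `G`-invariant `θ ∈ Irr(L)` over an abelian chief factor `L/N`,
the restriction `θ_N` is reducible iff `θ` vanishes on `L \ N`. -/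

theorem restriction_reducible_iff_vanishes (G : Type) [Group G] [Fintype G]
    (N L : Subgroup G) (hN : N.Normal) (hL : L.Normal) (hNL : N < L)
    (hchief : ∀ M : Subgroup G, M.Normal → N ≤ M → M ≤ L → M = N ∨ M = L)
    (habelian : ∀ x ∈ L, ∀ y ∈ L, x * y * x⁻¹ * y⁻¹ ∈ N)
    (θ : ↥L → ℂ) (hθ : IsIrrChar ↥L θ)
    (hinv : ∀ (g : G) (x y : ↥L), (y : G) = g * (x : G) * g⁻¹ → θ y = θ x) :
    ¬ IsIrrChar ↥(N.subgroupOf L) (fun x => θ x) ↔ ∀ x : ↥L, (x : G) ∉ N → θ x = 0 := by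
  classical
  obtain ⟨V, hVsimple, hVchar⟩ := hθ
  haveI := hVsimple
  set N' : Subgroup ↥L := N.subgroupOf L with hN'def
  letI : Invertible ((Fintype.card ↥L : ℂ)) :=
    invertibleOfNonzero (by exact_mod_cast Fintype.card_ne_zero)
  letI : Invertible ((Fintype.card ↥N' : ℂ)) :=
    invertibleOfNonzero (by exact_mod_cast Fintype.card_ne_zero)
  have hVnorm : ∑ z : ↥L, θ z * θ z⁻¹ = (Fintype.card ↥L : ℂ) := by
    have h := IrrAux.ortho V V
    rw [if_pos ⟨CategoryTheory.Iso.refl V⟩, hVchar] at h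
    exact IrrAux.eq_of_invOf_smul_eq_one h
  constructor
  · -- reducible → vanishing
    intro hred x hxN
    haveI hN'normal : N'.Normal := Subgroup.Normal.subgroupOf hN L
    letI : CommGroup (↥L ⧸ N') :=
      { (inferInstance : Group (↥L ⧸ N')) with
        mul_comm := by
          intro a b
          induction a using QuotientGroup.induction_on with | H u => ?_
          induction b using QuotientGroup.induction_on with | H v => ?_
          show QuotientGroup.mk u * QuotientGroup.mk v = QuotientGroup.mk v * QuotientGroup.mk u
          rw [← QuotientGroup.mk_mul, ← QuotientGroup.mk_mul]
          refine QuotientGroup.eq.mpr ?_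
          rw [Subgroup.mem_subgroupOf]
          have hh := habelian (↑v)⁻¹ (inv_mem v.2) (↑u)⁻¹ (inv_mem u.2)
          have he : ((↑((u * v)⁻¹ * (v * u)) : G)) =
              (↑v : G)⁻¹ * (↑u : G)⁻¹ * ((↑v : G)⁻¹)⁻¹ * ((↑u : G)⁻¹)⁻¹ := by
            push_cast
            group
          rw [he]
          exact hh }
    haveI : Finite (↥L ⧸ N') := Quotient.finite _
    letI : Fintype (↥L ⧸ N') := Fintype.ofFinite _
    haveI : NeZero ((Monoid.exponent (↥L ⧸ N') : ℂ)) :=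
      ⟨by exact_mod_cast Monoid.exponent_ne_zero_of_finite⟩
    obtain ⟨dualEquiv⟩ :=
      CommGroup.monoidHom_mulEquiv_of_hasEnoughRootsOfUnity (↥L ⧸ N') ℂ
    haveI : Finite ((↥L ⧸ N') →* ℂˣ) := Finite.of_equiv _ dualEquiv.toEquiv.symm
    letI : Fintype ((↥L ⧸ N') →* ℂˣ) := Fintype.ofFinite _
    have hcardD : Fintype.card ((↥L ⧸ N') →* ℂˣ) = Fintype.card (↥L ⧸ N') :=
      Fintype.card_congr dualEquiv.toEquiv
    set q : ↥L →* (↥L ⧸ N') := QuotientGroup.mk' N' with hqdef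
    -- orthogonality of linear characters
    have hortho : ∀ a : ↥L ⧸ N', ∑ l : (↥L ⧸ N') →* ℂˣ, ((l a : ℂˣ) : ℂ) =
        if a = 1 then (Fintype.card ((↥L ⧸ N') →* ℂˣ) : ℂ) else 0 := by
      intro a
      by_cases ha : a = 1
      · subst ha; simp [Finset.sum_const, nsmul_eq_mul]
      · rw [if_neg ha]
        obtain ⟨φ, hφ⟩ :=
          CommGroup.exists_apply_ne_one_of_hasEnoughRootsOfUnity (↥L ⧸ N') ℂ ha
        have hre : ∑ l : (↥L ⧸ N') →* ℂˣ, (((φ * l) a : ℂˣ) : ℂ) =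
            ∑ l : (↥L ⧸ N') →* ℂˣ, ((l a : ℂˣ) : ℂ) :=
          Fintype.sum_equiv (Equiv.mulLeft φ) _ _ (fun l => rfl)
        have h2 : ((φ a : ℂˣ) : ℂ) * ∑ l : (↥L ⧸ N') →* ℂˣ, ((l a : ℂˣ) : ℂ) =
            ∑ l : (↥L ⧸ N') →* ℂˣ, ((l a : ℂˣ) : ℂ) := by
          rw [Finset.mul_sum, ← hre]
          exact Finset.sum_congr rfl fun l _ => rfl
        have h3 : (((φ a : ℂˣ) : ℂ) - 1) * ∑ l : (↥L ⧸ N') →* ℂˣ, ((l a : ℂˣ) : ℂ) = 0 := by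
          rw [sub_mul, one_mul, h2, sub_self]
        rcases mul_eq_zero.mp h3 with h | h
        · exact absurd (Units.ext (by simpa using sub_eq_zero.mp h)) hφ
        · exact h
    -- the stabilizer condition
    set P : ((↥L ⧸ N') →* ℂˣ) → Prop :=
      fun l => ∀ z : ↥L, ((l (q z) : ℂˣ) : ℂ) * θ z = θ z with hPdef
    have hI : ∀ l : (↥L ⧸ N') →* ℂˣ, ∑ z : ↥L, ((l (q z) : ℂˣ) : ℂ) * θ z * θ z⁻¹
        = if P l then (Fintype.card ↥L : ℂ) else 0 := by
      intro l
      set l' : ↥L →* ℂˣ := l.comp q with hl'def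
      haveI : CategoryTheory.Simple (IrrAux.twist V l') := IrrAux.twist_simple V l'
      by_cases hP : P l
      · rw [if_pos hP]
        calc ∑ z : ↥L, ((l (q z) : ℂˣ) : ℂ) * θ z * θ z⁻¹
            = ∑ z : ↥L, θ z * θ z⁻¹ :=
              Finset.sum_congr rfl fun z _ => by rw [hP z]
          _ = (Fintype.card ↥L : ℂ) := hVnorm
      · rw [if_neg hP]
        have h := IrrAux.ortho (IrrAux.twist V l') V
        have hniso : ¬ Nonempty (IrrAux.twist V l' ≅ V) := by
          rintro ⟨i⟩
          apply hP
          intro z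
          have hc := congrFun (FDRep.char_iso i) z
          rw [IrrAux.twist_char, hVchar] at hc
          exact hc
        rw [if_neg hniso] at h
        have h2 : ∑ z : ↥L, ((l (q z) : ℂˣ) : ℂ) * θ z * θ z⁻¹
            = ∑ z : ↥L, (IrrAux.twist V l').character z * V.character z⁻¹ := by
          refine Finset.sum_congr rfl fun z _ => ?_
          rw [IrrAux.twist_char, hVchar]
          rfl
        rw [h2]
        have h5 := congrArg (fun t => (Fintype.card ↥L : ℂ) * t) h
        simp only [smul_eq_mul, mul_zero] at h5
        rwa [mul_invOf_cancel_left] at h5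
    -- the subgroup M
    set M : Subgroup G :=
      { carrier := {g : G | ∃ hg : g ∈ L, ∀ l : (↥L ⧸ N') →* ℂˣ, P l → l (q ⟨g, hg⟩) = 1}
        one_mem' := ⟨one_mem L, fun l _ => by
          rw [show (⟨(1 : G), one_mem L⟩ : ↥L) = 1 from rfl, map_one, map_one]⟩
        mul_mem' := by
          rintro a b ⟨ha, hfa⟩ ⟨hb, hfb⟩
          refine ⟨mul_mem ha hb, fun l hl => ?_⟩
          rw [show (⟨a * b, mul_mem ha hb⟩ : ↥L) = ⟨a, ha⟩ * ⟨b, hb⟩ from rfl, map_mul, map_mul,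
            hfa l hl, hfb l hl, mul_one]
        inv_mem' := by
          rintro a ⟨ha, hfa⟩
          refine ⟨inv_mem ha, fun l hl => ?_⟩
          rw [show (⟨a⁻¹, inv_mem ha⟩ : ↥L) = (⟨a, ha⟩ : ↥L)⁻¹ from rfl, map_inv, map_inv,
            hfa l hl, inv_one] } with hMdef
    have hMnormal : M.Normal := by
      constructor
      rintro m ⟨hmL, hf⟩ g
      refine ⟨hL.conj_mem m hmL g, ?_⟩
      intro l hl
      -- conjugation homomorphism z ↦ g z g⁻¹ on L
      let ψ : ↥L →* ↥L :=
        { toFun := fun z => ⟨g * ↑z * g⁻¹, hL.conj_mem ↑z z.2 g⟩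
          map_one' := by
            apply Subtype.ext
            simp
          map_mul' := fun z w => by
            apply Subtype.ext
            show g * (↑z * ↑w) * g⁻¹ = (g * ↑z * g⁻¹) * (g * ↑w * g⁻¹)
            group }
      have hker : ∀ n : ↥L, n ∈ N' → ((l.comp q).comp ψ) n = 1 := by
        intro n hn
        have hnN : (↑n : G) ∈ N := Subgroup.mem_subgroupOf.mp hn
        have hψn : ψ n ∈ N' := Subgroup.mem_subgroupOf.mpr (hN.conj_mem _ hnN g)
        show l (q (ψ n)) = 1
        rw [show q (ψ n) = 1 from (QuotientGroup.eq_one_iff _).mpr hψn, map_one]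
      set l'' : (↥L ⧸ N') →* ℂˣ :=
        QuotientGroup.lift N' ((l.comp q).comp ψ) hker with hl''def
      have hl''val : ∀ z : ↥L, l'' (q z) = l (q (ψ z)) := fun z => rfl
      have hPl'' : P l'' := by
        intro z
        have hθψ : θ (ψ z) = θ z := hinv g z (ψ z) rfl
        have := hl (ψ z)
        rw [hθψ] at this
        rw [hl''val z]
        exact this
      have := hf l'' hPl''
      rw [hl''val ⟨m, hmL⟩] at this
      exact this
    have hMN : N ≤ M := by
      intro n hn
      refine ⟨hNL.le hn, fun l _ => ?_⟩
      rw [show q ⟨n, hNL.le hn⟩ = 1 from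
        (QuotientGroup.eq_one_iff _).mpr (Subgroup.mem_subgroupOf.mpr hn), map_one]
    have hML : M ≤ L := by
      rintro m ⟨hm, _⟩
      exact hm
    rcases hchief M hMnormal hMN hML with hMeqN | hMeqL
    · -- M = N : vanishing
      have hxM : (↑x : G) ∉ M := by rw [hMeqN]; exact hxN
      have hnall : ¬ (∀ l : (↥L ⧸ N') →* ℂˣ, P l → l (q ⟨(↑x : G), x.2⟩) = 1) :=
        fun hall => hxM ⟨x.2, hall⟩
      push_neg at hnall
      obtain ⟨l, hPl, hlx⟩ := hnall
      have h1 : ((l (q x) : ℂˣ) : ℂ) * θ x = θ x := hPl x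
      have h2 : ((l (q x) : ℂˣ) : ℂ) ≠ 1 := by
        intro h
        exact hlx (Units.ext (by simpa using h))
      have h3 : (((l (q x) : ℂˣ) : ℂ) - 1) * θ x = 0 := by
        rw [sub_mul, one_mul, h1, sub_self]
      rcases mul_eq_zero.mp h3 with h | h
      · exact absurd (sub_eq_zero.mp h) h2
      · exact h
    · -- M = L : restriction is irreducible, contradiction
      exfalso
      apply hred
      refine ⟨FDRep.of (V.ρ.comp N'.subtype), ?_, ?_⟩
      swap
      · funext n
        show V.character ↑n = θ ↑n
        rw [hVchar]
      have hPone : P 1 := by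
        intro z
        rw [show ((1 : (↥L ⧸ N') →* ℂˣ) (q z)) = 1 from rfl, Units.val_one, one_mul]
      have hPonly : ∀ l : (↥L ⧸ N') →* ℂˣ, P l → l = 1 := by
        intro l hl
        refine MonoidHom.ext fun a => ?_
        obtain ⟨z, rfl⟩ := QuotientGroup.mk'_surjective N' a
        show l (q z) = 1
        have hzM : (↑z : G) ∈ M := by rw [hMeqL]; exact z.2
        obtain ⟨hg, hall⟩ := hzM
        exact (hall l hl).trans rfl
      apply IrrAux.simple_of_inner_one
      · obtain ⟨v, hv⟩ := IrrAux.exists_ne_zero V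
        exact ⟨v, hv⟩
      · -- the norm computation
        have hchareq : ∀ n : ↥N',
            (FDRep.of (V.ρ.comp N'.subtype)).character n *
              (FDRep.of (V.ρ.comp N'.subtype)).character n⁻¹ = θ ↑n * θ (↑n)⁻¹ := by
          intro n
          show V.character ↑n * V.character ↑(n⁻¹) = θ ↑n * θ (↑n)⁻¹
          rw [hVchar]
          rfl
        rw [Finset.sum_congr rfl fun n _ => hchareq n]
        -- compute the sum
        have hpt : ∀ z : ↥L, (if z ∈ N' then θ z * θ z⁻¹ else 0) =
            (Fintype.card ((↥L ⧸ N') →* ℂˣ) : ℂ)⁻¹ *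
              ∑ l : (↥L ⧸ N') →* ℂˣ, ((l (q z) : ℂˣ) : ℂ) * (θ z * θ z⁻¹) := by
          intro z
          rw [← Finset.sum_mul, hortho (q z)]
          by_cases hz : z ∈ N'
          · rw [if_pos hz, if_pos (show q z = 1 from (QuotientGroup.eq_one_iff z).mpr hz),
              ← mul_assoc, inv_mul_cancel₀ (by exact_mod_cast Fintype.card_ne_zero), one_mul]
          · rw [if_neg hz,
              if_neg (show ¬ q z = 1 from fun h => hz ((QuotientGroup.eq_one_iff z).mp h)),
              zero_mul, mul_zero]
        have hTT : ∑ n : ↥N', θ ↑n * θ (↑n)⁻¹ =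
            (Fintype.card ((↥L ⧸ N') →* ℂˣ) : ℂ)⁻¹ * (Fintype.card ↥L : ℂ) := by
          rw [IrrAux.sum_subtype_eq N' (fun z => θ z * θ z⁻¹),
            Finset.sum_congr rfl fun z _ => hpt z, ← Finset.mul_sum]
          congr 1
          rw [Finset.sum_comm]
          have hinner : ∀ l : (↥L ⧸ N') →* ℂˣ,
              ∑ z : ↥L, ((l (q z) : ℂˣ) : ℂ) * (θ z * θ z⁻¹) =
                if P l then (Fintype.card ↥L : ℂ) else 0 := by
            intro l
            rw [← hI l]
            exact Finset.sum_congr rfl fun z _ => by rw [mul_assoc]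
          rw [Finset.sum_congr rfl fun l _ => hinner l]
          rw [Finset.sum_congr rfl fun l _ => by
            rw [show (if P l then (Fintype.card ↥L : ℂ) else 0) =
              (if l = (1 : (↥L ⧸ N') →* ℂˣ) then (Fintype.card ↥L : ℂ) else 0) from by
                by_cases hPl : P l
                · rw [if_pos hPl, if_pos (hPonly l hPl)]
                · rw [if_neg hPl, if_neg (fun h1 => hPl (by rw [h1]; exact hPone))]]]
          rw [Finset.sum_ite_eq' Finset.univ (1 : (↥L ⧸ N') →* ℂˣ)
            (fun _ => (Fintype.card ↥L : ℂ)), if_pos (Finset.mem_univ _)]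
        rw [hTT, hcardD]
        have hLag : (Fintype.card ↥L : ℂ) =
            (Fintype.card (↥L ⧸ N') : ℂ) * (Fintype.card ↥N' : ℂ) := by
          have h7 := Subgroup.card_eq_card_quotient_mul_card_subgroup N'
          simp only [Nat.card_eq_fintype_card] at h7
          exact_mod_cast h7
        rw [hLag, smul_eq_mul]
        rw [inv_mul_cancel_left₀ (by exact_mod_cast Fintype.card_ne_zero)]
        exact invOf_mul_self _
  · -- vanishing → reducible
    rintro hvan ⟨W', hW'simple, hW'char⟩
    haveI := hW'simple
    have h1 : ∑ n : ↥N', θ ↑n * θ (↑n)⁻¹ = (Fintype.card ↥N' : ℂ) := by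
      have h := IrrAux.ortho W' W'
      rw [if_pos ⟨CategoryTheory.Iso.refl W'⟩, hW'char] at h
      exact IrrAux.eq_of_invOf_smul_eq_one h
    have h3 : ∑ n : ↥N', θ ↑n * θ (↑n)⁻¹ = ∑ z : ↥L, θ z * θ z⁻¹ := by
      rw [IrrAux.sum_subtype_eq N' (fun z => θ z * θ z⁻¹)]
      refine Finset.sum_congr rfl fun z _ => ?_
      by_cases hz : z ∈ N'
      · rw [if_pos hz]
      · rw [if_neg hz, hvan z (fun hmem => hz (Subgroup.mem_subgroupOf.mpr hmem)), zero_mul]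
    have hcard : Fintype.card ↥N' = Fintype.card ↥L := by
      have : (Fintype.card ↥N' : ℂ) = (Fintype.card ↥L : ℂ) := by rw [← h1, h3, hVnorm]
      exact_mod_cast this
    obtain ⟨xx, hxL, hxN⟩ := SetLike.exists_of_lt hNL
    have hlt : Fintype.card ↥N' < Fintype.card ↥L := by
      refine Fintype.card_lt_of_injective_of_notMem (fun n : ↥N' => (↑n : ↥L))
        Subtype.coe_injective (b := ⟨xx, hxL⟩) ?_
      rintro ⟨n, hn⟩
      apply hxN
      have h5 : (↑(↑n : ↥L) : G) ∈ N := Subgroup.mem_subgroupOf.mp n.2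
      have h6 : ((↑n : ↥L) : G) = xx := congrArg Subtype.val hn
      exact h6 ▸ h5
    omega
end

section
/- Let L and N be normal subgroups of a finite group G with L/N an abelian chief factor of G, and let θ ∈ Irr(L) be G-invariant such that θ vanishes on L \ N. Then for every linear character γ of L with N ≤ Ker(γ), the inner product [θ·conj(θ), γ] equals 1. Consequently θ·conj(θ) = (1_N)^L + Φ, where Φ is either zero or a character of L whose restriction to N contains no copy of 1_N. -/
open scoped Classical BigOperators

open LinearMap
open scoped Classical BigOperators

lemma sum_shift {M : Type*} [AddCommGroup M] (f : ℕ → M) (k : ℕ) (hper : f k = f 0) :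
    ∑ i ∈ Finset.range k, f (i + 1) = ∑ i ∈ Finset.range k, f i := by
  have h1 := Finset.sum_range_succ' f k
  have h2 := Finset.sum_range_succ f k
  rw [h2, hper] at h1
  exact add_right_cancel h1.symm

lemma trace_decomp {E : Type*} [AddCommGroup E] [Module ℂ E] [FiniteDimensional ℂ E]
    {S C : Submodule ℂ E} (h : IsCompl S C) (f : E →ₗ[ℂ] E)
    (hS : ∀ x ∈ S, f x ∈ S) (hC : ∀ x ∈ C, f x ∈ C) :
    trace ℂ E f = trace ℂ S (f.restrict hS) + trace ℂ C (f.restrict hC) := by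
  let e := Submodule.prodEquivOfIsCompl S C h
  have hfe : f = e.conj (LinearMap.prodMap (f.restrict hS) (f.restrict hC)) := by
    apply LinearMap.ext; intro x
    rw [LinearEquiv.conj_apply]
    obtain ⟨⟨s, c⟩, rfl⟩ := e.surjective x
    have he : e (s, c) = (s : E) + (c : E) := Submodule.coe_prodEquivOfIsCompl' S C h (s, c)
    simp only [LinearMap.comp_apply, LinearEquiv.coe_coe, LinearEquiv.symm_apply_apply]
    rw [he]
    rw [map_add]
    have h1 : (LinearMap.prodMap (f.restrict hS) (f.restrict hC)) (s, c)
        = ((f.restrict hS) s, (f.restrict hC) c) := rfl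
    rw [h1]
    have h2 : e ((f.restrict hS) s, (f.restrict hC) c)
        = ((f.restrict hS) s : E) + ((f.restrict hC) c : E) :=
      Submodule.coe_prodEquivOfIsCompl' S C h _
    rw [h2, LinearMap.restrict_apply, LinearMap.restrict_apply]
  rw [congrArg (trace ℂ E) hfe, trace_conj', trace_prodMap']

lemma conj_trace_pow_eq_one {E : Type*} [AddCommGroup E] [Module ℂ E] [FiniteDimensional ℂ E]
    (B : E →ₗ[ℂ] E) {k : ℕ} (hk : 0 < k) (hB : B ^ k = 1) :
    (starRingEnd ℂ) (trace ℂ E B) = trace ℂ E (B ^ (k - 1)) := by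
  rcases eq_or_lt_of_le (show 1 ≤ k from hk) with h1 | h2
  · -- k = 1
    have hk1 : k = 1 := h1.symm
    subst hk1
    rw [pow_one] at hB
    simp [hB, trace_one]
  -- k ≥ 2
  have hk0 : (k : ℂ) ≠ 0 := Nat.cast_ne_zero.mpr hk.ne'
  set ζ := Complex.exp (2 * Real.pi * Complex.I / k) with hζdef
  have hζ : IsPrimitiveRoot ζ k := Complex.isPrimitiveRoot_exp k hk.ne'
  have hζk : ζ ^ k = 1 := hζ.pow_eq_one
  have hζ0 : ζ ≠ 0 := fun h => by simp [h, zero_pow hk.ne'] at hζk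
  set P : ℕ → (E →ₗ[ℂ] E) := fun j => (k : ℂ)⁻¹ • ∑ i ∈ Finset.range k, ζ ^ (i * j) • B ^ i
    with hPdef
  have hwk : ∀ j : ℕ, (ζ ^ j) ^ k = 1 := fun j => by
    rw [← pow_mul, mul_comm j k, pow_mul, hζk, one_pow]
  have hw0 : ∀ j : ℕ, (ζ ^ j) ≠ 0 := fun j => pow_ne_zero _ hζ0
  have hPB : ∀ j, P j * B = (ζ ^ j)⁻¹ • P j := by
    intro j
    have hterm : ∀ i, (ζ ^ (i * j) • B ^ i) * B = (ζ ^ j)⁻¹ • (ζ ^ ((i + 1) * j) • B ^ (i + 1)) := by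
      intro i
      rw [smul_mul_assoc, ← pow_succ, smul_smul]
      congr 1
      have : ζ ^ ((i + 1) * j) = ζ ^ (i * j) * ζ ^ j := by
        rw [← pow_add]; congr 1; ring
      rw [this]
      field_simp
    have hper : ∀ i, ζ ^ ((i + k) * j) • B ^ (i + k) = ζ ^ (i * j) • B ^ i := by
      intro i
      have e1 : ζ ^ ((i + k) * j) = ζ ^ (i * j) := by
        have e2 : (i + k) * j = i * j + k * j := by ring
        rw [e2, pow_add, pow_mul ζ k j, hζk, one_pow, mul_one]
      rw [pow_add, hB, mul_one, e1]
    calc P j * B = (k : ℂ)⁻¹ • ((∑ i ∈ Finset.range k, ζ ^ (i * j) • B ^ i) * B) := by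
          rw [hPdef]; simp [smul_mul_assoc]
      _ = (k : ℂ)⁻¹ • ((ζ ^ j)⁻¹ • ∑ i ∈ Finset.range k, ζ ^ ((i + 1) * j) • B ^ (i + 1)) := by
          rw [Finset.sum_mul, Finset.sum_congr rfl (fun i _ => hterm i), ← Finset.smul_sum]
      _ = (k : ℂ)⁻¹ • ((ζ ^ j)⁻¹ • ∑ i ∈ Finset.range k, ζ ^ (i * j) • B ^ i) := by
          rw [sum_shift (fun i => ζ ^ (i * j) • B ^ i) k]
          rw [zero_mul, pow_zero, pow_zero]
          have := hper 0
          simpa using this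
      _ = (ζ ^ j)⁻¹ • P j := by rw [hPdef]; rw [smul_comm]
  have hPBi : ∀ j i, P j * B ^ i = ((ζ ^ j) ^ i)⁻¹ • P j := by
    intro j i
    induction i with
    | zero => simp
    | succ n ih =>
        rw [pow_succ, ← mul_assoc, ih, smul_mul_assoc, hPB, smul_smul, pow_succ, mul_inv]
  have hPP : ∀ j, P j * P j = P j := by
    intro j
    calc P j * P j = (k : ℂ)⁻¹ • ∑ i ∈ Finset.range k, ζ ^ (i * j) • (P j * B ^ i) := by
          conv_lhs => rw [hPdef]
          rw [mul_smul_comm, Finset.mul_sum]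
          congr 1
          exact Finset.sum_congr rfl (fun i _ => by rw [mul_smul_comm])
      _ = (k : ℂ)⁻¹ • ∑ i ∈ Finset.range k, P j := by
          congr 1
          refine Finset.sum_congr rfl (fun i _ => ?_)
          rw [hPBi, smul_smul]
          have : ζ ^ (i * j) = (ζ ^ j) ^ i := by rw [← pow_mul, mul_comm]
          rw [this, mul_inv_cancel₀ (pow_ne_zero _ (hw0 j)), one_smul]
      _ = P j := by
          rw [Finset.sum_const, Finset.card_range, ← Nat.cast_smul_eq_nsmul ℂ, smul_smul,
            inv_mul_cancel₀ hk0, one_smul]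
  have hProj : ∀ j, IsProj (range (P j)) (P j) := by
    intro j
    refine ⟨fun x => mem_range_self _ x, fun x hx => ?_⟩
    obtain ⟨y, rfl⟩ := hx
    have := LinearMap.ext_iff.mp (hPP j) y
    rwa [Module.End.mul_apply] at this
  set t : ℕ → ℂ := fun j => trace ℂ E (P j) with htdef
  have ht : ∀ j, (starRingEnd ℂ) (t j) = t j := by
    intro j
    rw [htdef]
    simp only
    rw [(hProj j).trace]
    exact Complex.conj_natCast _
  have hKey : ∀ m, 1 ≤ m → m < k →
      ∑ j ∈ Finset.range k, ζ ^ (m * j) • P j = B ^ (k - m) := by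
    intro m hm1 hmk
    have step1 : ∀ j, ζ ^ (m * j) • P j
        = (k : ℂ)⁻¹ • ∑ i ∈ Finset.range k, (ζ ^ (m + i)) ^ j • B ^ i := by
      intro j
      rw [hPdef]
      simp only
      rw [smul_comm, Finset.smul_sum]
      congr 1
      refine Finset.sum_congr rfl (fun i _ => ?_)
      rw [smul_smul, ← pow_add]
      congr 1
      rw [← pow_mul]
      congr 1
      ring
    rw [Finset.sum_congr rfl (fun j _ => step1 j), ← Finset.smul_sum, Finset.sum_comm]
    have hinner : ∀ i ∈ Finset.range k,
        ∑ j ∈ Finset.range k, (ζ ^ (m + i)) ^ j • B ^ i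
          = (if i = k - m then (k : ℂ) else 0) • B ^ i := by
      intro i hi
      rw [← Finset.sum_smul]
      congr 1
      by_cases hik : i = k - m
      · subst hik
        have hmi : m + (k - m) = k := by omega
        rw [hmi, hζk]
        simp
      · have hnd : ¬ (k ∣ (m + i)) := by
          intro hdvd
          obtain ⟨c, hc⟩ := hdvd
          have hik2 : i < k := Finset.mem_range.mp hi
          rcases c with _ | c
          · simp at hc; omega
          · rcases c with _ | c
            · exact hik (by omega)
            · have h2k : k * 2 ≤ k * (c + 1 + 1) := Nat.mul_le_mul_left k (by omega)
              have hlt : m + i < k * 2 := by omega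
              rw [hc] at hlt
              exact absurd hlt (not_lt.mpr h2k)
        have hne : ζ ^ (m + i) ≠ 1 := fun h => hnd ((hζ.pow_eq_one_iff_dvd _).mp h)
        rw [geom_sum_eq hne]
        have : (ζ ^ (m + i)) ^ k = 1 := by
          rw [← pow_mul, mul_comm, pow_mul, hζk, one_pow]
        rw [this]
        simp [hik]
    rw [Finset.sum_congr rfl hinner]
    have hsplit : ∀ i ∈ Finset.range k,
        (if i = k - m then (k : ℂ) else 0) • B ^ i
          = (if i = k - m then (k : ℂ) • B ^ i else 0) := by
      intro i _
      by_cases hik : i = k - m <;> simp [hik]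
    rw [Finset.sum_congr rfl hsplit]
    rw [Finset.sum_ite_eq' (Finset.range k) (k - m) (fun i => (k : ℂ) • B ^ i)]
    rw [if_pos (Finset.mem_range.mpr (by omega))]
    rw [smul_smul, inv_mul_cancel₀ hk0, one_smul]
  have htr : ∀ m, 1 ≤ m → m < k →
      ∑ j ∈ Finset.range k, ζ ^ (m * j) * t j = trace ℂ E (B ^ (k - m)) := by
    intro m hm1 hmk
    rw [← hKey m hm1 hmk, map_sum]
    exact Finset.sum_congr rfl (fun j _ => by rw [map_smul, smul_eq_mul])
  have h1 : trace ℂ E B = ∑ j ∈ Finset.range k, ζ ^ ((k - 1) * j) * t j := by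
    have := htr (k - 1) (by omega) (by omega)
    have hkk : k - (k - 1) = 1 := by omega
    rw [hkk, pow_one] at this
    exact this.symm
  have h2 : trace ℂ E (B ^ (k - 1)) = ∑ j ∈ Finset.range k, ζ ^ (1 * j) * t j := by
    exact (htr 1 (le_refl 1) (by omega)).symm
  rw [h1, h2, map_sum]
  refine Finset.sum_congr rfl (fun j hj => ?_)
  rw [map_mul, ht j]
  congr 1
  have e1 : ζ ^ ((k - 1) * j) = (ζ ^ j) ^ (k - 1) := by
    rw [← pow_mul]; congr 1; ring
  have e2 : ζ ^ (1 * j) = ζ ^ j := by rw [one_mul]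
  rw [e1, e2]
  have hnorm : ‖(ζ ^ j) ^ (k - 1)‖ = 1 := by
    refine Complex.norm_eq_one_of_pow_eq_one ?_ hk.ne'
    rw [← pow_mul, mul_comm, pow_mul, hwk j, one_pow]
  rw [← Complex.inv_eq_conj hnorm]
  refine inv_eq_of_mul_eq_one_left ?_
  rw [← pow_succ']
  have hsk : k - 1 + 1 = k := by omega
  rw [hsk, hwk j]

lemma FDRep_character_conj_inv {H : Type} [Group H] [Fintype H] (V : FDRep ℂ H) (g : H) :
    (starRingEnd ℂ) (V.character g) = V.character g⁻¹ := by
  have hk : 0 < orderOf g := orderOf_pos g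
  have hB : (V.ρ g) ^ (orderOf g) = 1 := by rw [← map_pow, pow_orderOf_eq_one, map_one]
  have hmul : g * g ^ (orderOf g - 1) = 1 := by
    rw [← pow_succ', Nat.sub_add_cancel hk]
    exact pow_orderOf_eq_one g
  have hginv : g⁻¹ = g ^ (orderOf g - 1) := inv_eq_of_mul_eq_one_right hmul
  have hstep : ((V.ρ g) ^ (orderOf g - 1)) = V.ρ (g ^ (orderOf g - 1)) := (map_pow V.ρ g _).symm
  calc (starRingEnd ℂ) (V.character g)
      = trace ℂ V ((V.ρ g) ^ (orderOf g - 1)) := conj_trace_pow_eq_one (V.ρ g) hk hB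
    _ = trace ℂ V (V.ρ (g ^ (orderOf g - 1))) := by rw [hstep]
    _ = V.character g⁻¹ := by rw [← hginv]; rfl

lemma sum_char_mul_char_inv {H : Type} [Group H] [Fintype H] (V : FDRep ℂ H)
    (hs : CategoryTheory.Simple V) :
    ∑ g : H, V.character g * V.character g⁻¹ = (Fintype.card H : ℂ) := by
  have hcard : (Fintype.card H : ℂ) ≠ 0 := Nat.cast_ne_zero.mpr Fintype.card_ne_zero
  have hcard' : (Nat.card H : ℂ) ≠ 0 := by rw [Nat.card_eq_fintype_card]; exact hcard
  letI : Invertible ((Nat.card H : ℂ)) := invertibleOfNonzero hcard'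
  letI := hs
  have h := FDRep.char_orthonormal (k := ℂ) (G := H) V V
  rw [if_pos ⟨CategoryTheory.Iso.refl V⟩] at h
  have h1 := (inv_mul_eq_one₀ (b := ∑ g : H, V.character g * V.character g⁻¹) hcard').mp
    (by exact_mod_cast h)
  rw [Nat.card_eq_fintype_card] at h1
  exact h1.symm


lemma exists_complement_char {H : Type} [Group H] [Fintype H] (M : Subgroup H) (hM : M.Normal)
    {E : Type} [AddCommGroup E] [Module ℂ E] [FiniteDimensional ℂ E]
    (σ : Representation ℂ H E) :
    ∃ W : FDRep ℂ H, ∀ g : H, W.character g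
      = trace ℂ E (σ g)
        - (Fintype.card ↥M : ℂ)⁻¹ * ∑ n : ↥M, trace ℂ E (σ (g * ↑n)) := by
  have hM0 : (Fintype.card ↥M : ℂ) ≠ 0 := Nat.cast_ne_zero.mpr Fintype.card_ne_zero
  set π : E →ₗ[ℂ] E := (Fintype.card ↥M : ℂ)⁻¹ • ∑ n : ↥M, σ ↑n with hπdef
  have hmulterm : ∀ (x y : H), σ x * σ y = σ (x * y) := fun x y => (map_mul σ x y).symm
  have hπσn : ∀ n : ↥M, π * σ ↑n = π := by
    intro n
    rw [hπdef, smul_mul_assoc, Finset.sum_mul]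
    congr 1
    rw [Finset.sum_congr rfl (fun (m : ↥M) _ => hmulterm (↑m : H) (↑n : H))]
    have hcoe : ∀ m : ↥M, (↑m : H) * ↑n = ↑(m * n) := fun m => rfl
    rw [Finset.sum_congr rfl (fun (m : ↥M) _ => by rw [hcoe m])]
    exact Equiv.sum_comp (Equiv.mulRight n) (fun m : ↥M => σ (↑m : H))
  have hππ : π * π = π := by
    conv_lhs => rw [hπdef]
    rw [mul_smul_comm, Finset.mul_sum]
    rw [Finset.sum_congr rfl (fun (n : ↥M) _ => hπσn n)]
    rw [Finset.sum_const, Finset.card_univ, ← Nat.cast_smul_eq_nsmul ℂ, smul_smul,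
      inv_mul_cancel₀ hM0, one_smul]
  have hπfix : ∀ y, π (π y) = π y := by
    intro y
    have := LinearMap.ext_iff.mp hππ y
    rwa [Module.End.mul_apply] at this
  have hπcomm : ∀ g : H, σ g * π = π * σ g := by
    intro g
    rw [hπdef, mul_smul_comm, smul_mul_assoc, Finset.mul_sum, Finset.sum_mul]
    congr 1
    rw [Finset.sum_congr rfl (fun (n : ↥M) _ => hmulterm g (↑n : H)),
      Finset.sum_congr rfl (fun (n : ↥M) _ => hmulterm (↑n : H) g)]
    have hconjmem : ∀ n : ↥M, g * ↑n * g⁻¹ ∈ M := fun n => hM.conj_mem _ n.2 g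
    have hconjmem' : ∀ n : ↥M, g⁻¹ * ↑n * g ∈ M := by
      intro n
      have := hM.conj_mem _ n.2 g⁻¹
      rwa [inv_inv] at this
    let ce : ↥M ≃ ↥M :=
      { toFun := fun n => ⟨g * ↑n * g⁻¹, hconjmem n⟩
        invFun := fun n => ⟨g⁻¹ * ↑n * g, hconjmem' n⟩
        left_inv := fun n => by
          apply Subtype.ext
          show g⁻¹ * (g * ↑n * g⁻¹) * g = ↑n
          group
        right_inv := fun n => by
          apply Subtype.ext
          show g * (g⁻¹ * ↑n * g) * g⁻¹ = ↑n
          group }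
    rw [← Equiv.sum_comp ce (fun n : ↥M => σ ((↑n : H) * g))]
    refine Finset.sum_congr rfl (fun n _ => ?_)
    have hcoe : (↑(ce n) : H) = g * ↑n * g⁻¹ := rfl
    rw [hcoe]
    congr 1
    group
  set S : Submodule ℂ E := LinearMap.range π with hSdef
  set C : Submodule ℂ E := LinearMap.ker π with hCdef
  have hπS : ∀ x ∈ S, π x = x := by
    rintro x ⟨y, rfl⟩
    exact hπfix y
  have hSC : IsCompl S C := by
    constructor
    · rw [disjoint_iff_inf_le]
      rintro x ⟨hxS, hxC⟩
      have h1 : π x = x := hπS x hxS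
      have h2 : π x = 0 := hxC
      rw [h1] at h2
      simp [h2]
    · rw [codisjoint_iff_le_sup]
      intro x _
      refine Submodule.mem_sup.mpr ⟨π x, ⟨x, rfl⟩, x - π x, ?_, by abel⟩
      show π (x - π x) = 0
      rw [map_sub, hπfix, sub_self]
  have hSinv : ∀ g : H, ∀ x ∈ S, σ g x ∈ S := by
    rintro g x ⟨y, rfl⟩
    refine ⟨σ g y, ?_⟩
    have := LinearMap.ext_iff.mp (hπcomm g) y
    rw [Module.End.mul_apply, Module.End.mul_apply] at this
    exact this.symm
  have hCinv : ∀ g : H, ∀ x ∈ C, σ g x ∈ C := by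
    intro g x hx
    show π (σ g x) = 0
    have := LinearMap.ext_iff.mp (hπcomm g) x
    rw [Module.End.mul_apply, Module.End.mul_apply] at this
    rw [← this]
    have hx0 : π x = 0 := hx
    rw [hx0, map_zero]
  let τ : Representation ℂ H ↥C :=
    { toFun := fun g => (σ g).restrict (hCinv g)
      map_one' := by
        apply LinearMap.ext
        intro x
        apply Subtype.ext
        rw [LinearMap.restrict_apply]
        show σ 1 ↑x = ↑x
        rw [map_one]
        rfl
      map_mul' := by
        intro g h
        apply LinearMap.ext
        intro x
        apply Subtype.ext
        rw [LinearMap.restrict_apply]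
        show σ (g * h) ↑x = _
        rw [map_mul]
        rfl }
  have hτ : ∀ g : H, τ g = (σ g).restrict (hCinv g) := fun g => rfl
  refine ⟨FDRep.of τ, fun g => ?_⟩
  have hWchar : (FDRep.of τ).character g = trace ℂ ↥C (τ g) := rfl
  rw [hWchar]
  -- trace of σ g on all of E
  have hd1 := trace_decomp hSC (σ g) (hSinv g) (hCinv g)
  -- trace of σ g ∘ π
  have hfS : ∀ x ∈ S, (σ g * π) x ∈ S := by
    intro x hx
    rw [Module.End.mul_apply]
    exact hSinv g _ ⟨x, rfl⟩
  have hfC : ∀ x ∈ C, (σ g * π) x ∈ C := by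
    intro x hx
    rw [Module.End.mul_apply]
    have hx0 : π x = 0 := hx
    rw [hx0, map_zero]
    exact C.zero_mem
  have hd2 := trace_decomp hSC (σ g * π) hfS hfC
  have hresC : (σ g * π).restrict hfC = 0 := by
    apply LinearMap.ext
    intro x
    apply Subtype.ext
    rw [LinearMap.restrict_apply]
    show (σ g * π) ↑x = _
    rw [Module.End.mul_apply]
    have hx0 : π ↑x = 0 := x.2
    rw [hx0, map_zero]
    rfl
  have hresS : (σ g * π).restrict hfS = (σ g).restrict (hSinv g) := by
    apply LinearMap.ext
    intro x
    apply Subtype.ext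
    rw [LinearMap.restrict_apply, LinearMap.restrict_apply]
    show (σ g * π) ↑x = σ g ↑x
    rw [Module.End.mul_apply, hπS ↑x x.2]
  have htrS : trace ℂ S ((σ g).restrict (hSinv g))
      = (Fintype.card ↥M : ℂ)⁻¹ * ∑ n : ↥M, trace ℂ E (σ (g * ↑n)) := by
    have h1 : trace ℂ E (σ g * π) = trace ℂ S ((σ g).restrict (hSinv g)) := by
      rw [hd2, hresC, hresS, map_zero, add_zero]
    rw [← h1, hπdef, mul_smul_comm, Finset.mul_sum,
      Finset.sum_congr rfl (fun (n : ↥M) _ => hmulterm g (↑n : H)), map_smul, map_sum,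
      smul_eq_mul]
  rw [hτ g, hd1, htrS]
  ring

/-- If a `G`-invariant `θ ∈ Irr(L)` vanishes on `L \ N` for an abelian chief factor `L/N`,
then `[θ ⬝ conj θ, γ] = 1` for every linear character `γ` of `L` with `N ≤ Ker γ`, and
`θ ⬝ conj θ = (1_N)^L + Φ` with `Φ` zero or a character of `L` and `[Φ_N, 1_N] = 0`. -/
theorem theta_thetabar_decomposition (G : Type) [Group G] [Fintype G]
    (N L : Subgroup G) (hN : N.Normal) (hL : L.Normal) (hNL : N < L)
    (hchief : ∀ M : Subgroup G, M.Normal → N ≤ M → M ≤ L → M = N ∨ M = L)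
    (habelian : ∀ x ∈ L, ∀ y ∈ L, x * y * x⁻¹ * y⁻¹ ∈ N)
    (θ : ↥L → ℂ) (hθ : IsIrrChar ↥L θ)
    (hinv : ∀ (g : G) (x y : ↥L), (y : G) = g * (x : G) * g⁻¹ → θ y = θ x)
    (hvanish : ∀ x : ↥L, (x : G) ∉ N → θ x = 0) :
    (∀ γ : ↥L →* ℂ, (∀ x : ↥L, (x : G) ∈ N → γ x = 1) →
        charInner ↥L (fun g => θ g * (starRingEnd ℂ) (θ g)) (fun g => γ g) = 1) ∧
    ∃ Φ : ↥L → ℂ,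
      (∀ g : ↥L, θ g * (starRingEnd ℂ) (θ g)
          = indChar ↥L (N.subgroupOf L) (fun _ => 1) g + Φ g) ∧
      (Φ = 0 ∨ ∃ W : FDRep ℂ ↥L, W.character = Φ) ∧
      charInner ↥(N.subgroupOf L) (fun x => Φ x) (fun _ => 1) = 0 := by
  classical
  obtain ⟨V, hVsimple, hVchar⟩ := hθ
  subst hVchar
  set N' : Subgroup ↥L := N.subgroupOf L with hN'def
  have hN'norm : N'.Normal := hN.subgroupOf L
  have hvan : ∀ g : ↥L, g ∉ N' → V.character g = 0 := fun g hg =>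
    hvanish g (fun h => hg (Subgroup.mem_subgroupOf.mpr h))
  have hconj : ∀ g : ↥L, (starRingEnd ℂ) (V.character g) = V.character g⁻¹ :=
    FDRep_character_conj_inv V
  have horth : ∑ g : ↥L, V.character g * V.character g⁻¹ = (Fintype.card ↥L : ℂ) :=
    sum_char_mul_char_inv V hVsimple
  have hL0 : (Fintype.card ↥L : ℂ) ≠ 0 := Nat.cast_ne_zero.mpr Fintype.card_ne_zero
  have hN0 : (Fintype.card ↥N' : ℂ) ≠ 0 := Nat.cast_ne_zero.mpr Fintype.card_ne_zero
  -- sums over the subgroup N'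
  have hsub : ∀ (f : ↥L → ℂ), (∀ g, g ∉ N' → f g = 0) →
      ∑ x : ↥N', f ↑x = ∑ g : ↥L, f g := by
    intro f hf
    rw [← Finset.sum_subtype (Finset.univ.filter (fun g : ↥L => g ∈ N'))
      (fun x => by simp) f]
    rw [Finset.sum_filter]
    refine (Finset.sum_congr rfl (fun g _ => ?_)).symm
    by_cases h : g ∈ N'
    · rw [if_pos h]
    · rw [if_neg h, hf g h]
  have hNsum : ∑ x : ↥N', V.character ↑x * V.character (↑x)⁻¹ = (Fintype.card ↥L : ℂ) := by
    rw [hsub (fun g => V.character g * V.character g⁻¹)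
      (fun g hg => by show V.character g * V.character g⁻¹ = 0; rw [hvan g hg, zero_mul])]
    exact horth
  -- value of the induced character
  have hmemconj : ∀ (g x : ↥L), (x⁻¹ * g * x ∈ N') ↔ g ∈ N' := by
    intro g x
    constructor
    · intro h
      have h2 := hN'norm.conj_mem _ h x
      have h3 : x * (x⁻¹ * g * x) * x⁻¹ = g := by group
      rwa [h3] at h2
    · intro h
      have h2 := hN'norm.conj_mem _ h x⁻¹
      rwa [inv_inv] at h2
  have hNat : ((Nat.card ↥N' : ℂ)) = (Fintype.card ↥N' : ℂ) := by
    rw [Nat.card_eq_fintype_card]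
  have hindval : ∀ g : ↥L, indChar ↥L N' (fun _ => (1 : ℂ)) g
      = if g ∈ N' then (Fintype.card ↥L : ℂ) * (Fintype.card ↥N' : ℂ)⁻¹ else 0 := by
    intro g
    show (Nat.card ↥N' : ℂ)⁻¹ * ∑ x : ↥L, (if h : x⁻¹ * g * x ∈ N' then (1 : ℂ) else 0) = _
    have hterm : ∀ x : ↥L, (if h : x⁻¹ * g * x ∈ N' then (1 : ℂ) else 0)
        = if g ∈ N' then (1 : ℂ) else 0 := by
      intro x
      by_cases h : g ∈ N'
      · rw [dif_pos ((hmemconj g x).mpr h), if_pos h]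
      · rw [dif_neg (fun hh => h ((hmemconj g x).mp hh)), if_neg h]
    rw [Finset.sum_congr rfl (fun x _ => hterm x), Finset.sum_const, Finset.card_univ]
    by_cases h : g ∈ N'
    · rw [if_pos h, if_pos h, nsmul_eq_mul, mul_one, hNat]
      ring
    · rw [if_neg h, if_neg h, smul_zero, mul_zero]
  -- Part 1
  constructor
  · intro γ hγ
    show (Fintype.card ↥L : ℂ)⁻¹ * ∑ g : ↥L,
      (V.character g * (starRingEnd ℂ) (V.character g)) * (starRingEnd ℂ) (γ g) = 1
    have hterm : ∀ g : ↥L, (V.character g * (starRingEnd ℂ) (V.character g))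
        * (starRingEnd ℂ) (γ g) = V.character g * V.character g⁻¹ := by
      intro g
      by_cases hg : g ∈ N'
      · rw [hγ g (Subgroup.mem_subgroupOf.mp hg), map_one, mul_one, hconj]
      · rw [hvan g hg]
        simp
    rw [Finset.sum_congr rfl (fun g _ => hterm g), horth, inv_mul_cancel₀ hL0]
  -- Part 2
  · -- the conjugation representation on End(V)
    set σ : Representation ℂ ↥L ((V : Type) →ₗ[ℂ] (V : Type)) :=
      Representation.linHom V.ρ V.ρ with hσdef
    have hσtr : ∀ g : ↥L, trace ℂ _ (σ g) = V.character g⁻¹ * V.character g := fun g =>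
      FDRep.char_linHom V V g
    obtain ⟨W, hW⟩ := exists_complement_char N' hN'norm σ
    have havg : ∀ g : ↥L, (Fintype.card ↥N' : ℂ)⁻¹ * ∑ n : ↥N', trace ℂ _ (σ (g * ↑n))
        = indChar ↥L N' (fun _ => (1 : ℂ)) g := by
      intro g
      rw [hindval g]
      by_cases hg : g ∈ N'
      · rw [if_pos hg]
        have hcoe : ∀ n : ↥N', g * ↑n = ↑((⟨g, hg⟩ : ↥N') * n) := fun n => rfl
        rw [Finset.sum_congr rfl (fun (n : ↥N') _ => by rw [hcoe n])]
        have hre : ∑ n : ↥N', trace ℂ _ (σ (↑((⟨g, hg⟩ : ↥N') * n) : ↥L))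
            = ∑ m : ↥N', trace ℂ _ (σ (↑m : ↥L)) := by
          have h3 := Equiv.sum_comp (Equiv.mulLeft (⟨g, hg⟩ : ↥N'))
            (fun m : ↥N' => trace ℂ _ (σ (↑m : ↥L)))
          simpa using h3
        rw [hre]
        rw [Finset.sum_congr rfl (fun (m : ↥N') _ => hσtr (↑m : ↥L))]
        rw [Finset.sum_congr rfl
          (fun (m : ↥N') _ => mul_comm (V.character ((↑m : ↥L)⁻¹)) (V.character ↑m)), hNsum]
        ring
      · rw [if_neg hg]
        have hz : ∀ n : ↥N', trace ℂ _ (σ (g * ↑n)) = 0 := by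
          intro n
          have hgn : g * ↑n ∉ N' := by
            intro hmem
            apply hg
            have h2 : (g * ↑n) * (↑n)⁻¹ ∈ N' := N'.mul_mem hmem (N'.inv_mem n.2)
            simpa using h2
          rw [hσtr, hvan _ hgn, mul_zero]
        rw [Finset.sum_congr rfl (fun (n : ↥N') _ => hz n), Finset.sum_const, smul_zero,
          mul_zero]
    have hA : ∀ g : ↥L, V.character g * (starRingEnd ℂ) (V.character g)
        = indChar ↥L N' (fun _ => (1 : ℂ)) g + W.character g := by
      intro g
      rw [hW g, havg g, hconj g, hσtr g]
      ring
    refine ⟨W.character, hA, Or.inr ⟨W, rfl⟩, ?_⟩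
    show (Fintype.card ↥N' : ℂ)⁻¹
      * ∑ x : ↥N', W.character ↑x * (starRingEnd ℂ) (1 : ℂ) = 0
    have hΦ : ∀ x : ↥N', W.character ↑x * (starRingEnd ℂ) (1 : ℂ)
        = V.character ↑x * V.character (↑x)⁻¹
          - (Fintype.card ↥L : ℂ) * (Fintype.card ↥N' : ℂ)⁻¹ := by
      intro x
      have h2 := hA ↑x
      rw [hindval, if_pos x.2, hconj] at h2
      rw [map_one, mul_one]
      linear_combination -h2
    rw [Finset.sum_congr rfl (fun (x : ↥N') _ => hΦ x)]
    rw [Finset.sum_sub_distrib, hNsum, Finset.sum_const, Finset.card_univ, nsmul_eq_mul]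
    field_simp
    simp
end
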